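/- Fix λ > 0 and for ε ∈ (0,1) small let x(ε) be the unique solution of g_λ(x) = ε on (0,∞). Then as ε → 0⁺, x(ε) ∼ L / W(L/(eλ)), where L = log(1/ε) and W is the principal branch of the Lambert W function; i.e., the ratio of the two sides tends to 1. -/

import Mathlib

open Real Filter

/-- Upper incomplete gamma function `Γ(a, x) = ∫_x^∞ t^(a-1) e^(-t) dt`. -/
noncomputable def upperGamma (a x : ℝ) : ℝ := ∫ t in Set.Ioi x, t ^ (a - 1) * Real.exp (-t)

/-- `g_λ(x) = 1 − Γ(x+1, λ)/Γ(x+1)`. -/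
noncomputable def gFun (lam x : ℝ) : ℝ := 1 - upperGamma (x + 1) lam / Real.Gamma (x + 1)

/-!
Put `a = x + 1`. Splitting `Γ(a) = γ(a, λ) + Γ(a, λ)` gives `g_λ(x) Γ(a + 1) = a γ(a, λ)`, and
`e^{-λ} ≤ e^{-t} ≤ 1` on `[0, λ]` gives `e^{-λ} λ^a ≤ g_λ(x) Γ(a + 1) ≤ λ^a`, so
`log (1 / g_λ(x)) = log Γ(a + 1) + O(a)`. Since `Γ` is increasing on `[2, ∞)`, `g_λ(x(ε)) = ε → 0` forces
`x(ε) → ∞`, and the crude Stirling bounds `a^a e^{-a} ≤ Γ(a + 1) ≤ 2 (2a)^a e^{-a}` give `L ∼ a log a`.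
Taking logarithms in `W e^W = y` shows `W(y) ∼ log y`, so `W(L/(eλ)) ∼ log L ∼ log (a log a) ∼ log a`
and `x W(L/(eλ)) / L ∼ a log a / (a log a) = 1`.
-/

open Set MeasureTheory Asymptotics

noncomputable def lowerGamma (a x : ℝ) : ℝ := ∫ t in (0)..x, t ^ (a - 1) * exp (-t)

section IncompleteGamma

variable {a x : ℝ}

lemma integrableOn_rpow_mul_exp_neg (ha : 0 < a) :
    IntegrableOn (fun t : ℝ => t ^ (a - 1) * exp (-t)) (Ioi 0) :=
  (GammaIntegral_convergent ha).congr_fun (fun _ _ => mul_comm _ _) measurableSet_Ioi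

lemma lowerGamma_eq_Gamma_sub_upperGamma (ha : 0 < a) (hx : 0 ≤ x) :
    lowerGamma a x = Gamma a - upperGamma a x := by
  rw [lowerGamma, upperGamma, Gamma_eq_integral ha,
    ← intervalIntegral.integral_Ioi_sub_Ioi (integrableOn_rpow_mul_exp_neg ha) hx]
  simp only [mul_comm]

lemma intervalIntegrable_rpow_mul_exp_neg (ha : 0 < a) :
    IntervalIntegrable (fun t : ℝ => t ^ (a - 1) * exp (-t)) volume 0 x :=
  (intervalIntegral.intervalIntegrable_rpow' (by linarith)).mul_continuousOn (by fun_prop)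

lemma integral_rpow_sub_one (ha : 0 < a) : ∫ t in (0)..x, t ^ (a - 1) = x ^ a / a := by
  rw [integral_rpow (Or.inl (by linarith)), sub_add_cancel, zero_rpow ha.ne']
  ring

lemma lowerGamma_le (ha : 0 < a) (hx : 0 ≤ x) : lowerGamma a x ≤ x ^ a / a := by
  rw [← integral_rpow_sub_one ha]
  refine intervalIntegral.integral_mono_on hx (intervalIntegrable_rpow_mul_exp_neg ha)
    (intervalIntegral.intervalIntegrable_rpow' (by linarith)) fun t ht => ?_
  exact mul_le_of_le_one_right (rpow_nonneg ht.1 _) (exp_le_one_iff.2 (by linarith [ht.1]))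

lemma exp_neg_mul_le_lowerGamma (ha : 0 < a) (hx : 0 ≤ x) :
    exp (-x) * (x ^ a / a) ≤ lowerGamma a x := by
  rw [← integral_rpow_sub_one ha, ← intervalIntegral.integral_const_mul]
  refine intervalIntegral.integral_mono_on hx
    ((intervalIntegral.intervalIntegrable_rpow' (by linarith)).const_mul _)
    (intervalIntegrable_rpow_mul_exp_neg ha) fun t ht => ?_
  rw [mul_comm]
  exact mul_le_mul_of_nonneg_left (exp_le_exp.2 (by linarith [ht.2])) (rpow_nonneg ht.1 _)

end IncompleteGamma

section gFun

variable {lam x : ℝ}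

lemma gFun_mul_Gamma_add_two (hlam : 0 ≤ lam) (hx : -1 < x) :
    gFun lam x * Gamma (x + 2) = (x + 1) * lowerGamma (x + 1) lam := by
  have hΓ : Gamma (x + 1) ≠ 0 := (Gamma_pos_of_pos (by linarith)).ne'
  rw [show x + 2 = x + 1 + 1 by ring, Gamma_add_one (by linarith),
    lowerGamma_eq_Gamma_sub_upperGamma (by linarith) hlam, gFun]
  field_simp

lemma gFun_mul_Gamma_add_two_mem_Icc (hlam : 0 ≤ lam) (hx : -1 < x) :
    gFun lam x * Gamma (x + 2) ∈ Icc (exp (-lam) * lam ^ (x + 1)) (lam ^ (x + 1)) := by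
  have hx1 : 0 < x + 1 := by linarith
  rw [gFun_mul_Gamma_add_two hlam hx]
  constructor
  · calc exp (-lam) * lam ^ (x + 1) = (x + 1) * (exp (-lam) * (lam ^ (x + 1) / (x + 1))) := by
          field_simp
      _ ≤ _ := mul_le_mul_of_nonneg_left (exp_neg_mul_le_lowerGamma hx1 hlam) hx1.le
  · have := mul_le_mul_of_nonneg_left (lowerGamma_le hx1 hlam) hx1.le
    rwa [mul_div_cancel₀ _ hx1.ne'] at this

lemma gFun_pos (hlam : 0 < lam) (hx : -1 < x) : 0 < gFun lam x := by
  have hprod : 0 < gFun lam x * Gamma (x + 2) :=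
    lt_of_lt_of_le (by positivity) (gFun_mul_Gamma_add_two_mem_Icc hlam.le hx).1
  exact (mul_pos_iff_of_pos_right (Gamma_pos_of_pos (by linarith))).1 hprod

lemma abs_log_gFun_add_log_Gamma_le (hlam : 0 < lam) (hx : -1 < x) :
    |log (gFun lam x) + log (Gamma (x + 2))| ≤ (x + 1) * |log lam| + lam := by
  obtain ⟨hlow, hupp⟩ := gFun_mul_Gamma_add_two_mem_Icc hlam.le hx
  have hg := gFun_pos hlam hx
  have hΓ : 0 < Gamma (x + 2) := Gamma_pos_of_pos (by linarith)
  rw [← log_mul hg.ne' hΓ.ne']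
  have h1 := log_le_log (by positivity) hlow
  have h2 := log_le_log (by positivity) hupp
  rw [log_mul (exp_pos _).ne' (by positivity), log_exp, log_rpow hlam] at h1
  rw [log_rpow hlam] at h2
  have hx1 : 0 ≤ x + 1 := by linarith
  have h3 := mul_le_mul_of_nonneg_left (le_abs_self (log lam)) hx1
  have h4 := mul_le_mul_of_nonneg_left (neg_abs_le (log lam)) hx1
  rw [abs_le]
  constructor <;> linarith

end gFun

section Gamma

variable {a : ℝ}

lemma rpow_mul_exp_neg_le_Gamma_add_one (ha : 0 ≤ a) : a ^ a * exp (-a) ≤ Gamma (a + 1) := by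
  have hint : IntegrableOn (fun t : ℝ => exp (-t) * t ^ a) (Ioi 0) := by
    simpa using GammaIntegral_convergent (s := a + 1) (by linarith)
  rw [Gamma_eq_integral (by linarith), add_sub_cancel_right]
  calc a ^ a * exp (-a) = ∫ t in Ioi a, a ^ a * exp (-t) := by
        rw [integral_const_mul, integral_exp_neg_Ioi]
    _ ≤ ∫ t in Ioi a, exp (-t) * t ^ a := by
        refine setIntegral_mono_on ((integrableOn_exp_neg_Ioi a).const_mul _)
          (hint.mono_set (Ioi_subset_Ioi ha)) measurableSet_Ioi fun t ht => ?_
        rw [mul_comm]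
        exact mul_le_mul_of_nonneg_left (rpow_le_rpow ha (le_of_lt ht) ha) (exp_pos _).le
    _ ≤ ∫ t in Ioi 0, exp (-t) * t ^ a := by
        refine setIntegral_mono_set hint ?_ (Ioi_subset_Ioi ha).eventuallyLE
        filter_upwards [ae_restrict_mem measurableSet_Ioi] with t (ht : 0 < t)
        positivity

lemma Gamma_add_one_le (ha : 0 < a) : Gamma (a + 1) ≤ 2 * (2 * a) ^ a * exp (-a) := by
  have hint : IntegrableOn (fun t : ℝ => exp (-t) * t ^ a) (Ioi 0) := by
    simpa using GammaIntegral_convergent (s := a + 1) (by linarith)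
  -- `t ^ a * exp (-t / 2)` is maximal at `t = 2 * a`
  have hpt : ∀ t ∈ Ioi (0 : ℝ), exp (-t) * t ^ a ≤ (2 * a) ^ a * exp (-a) * exp (-(1 / 2) * t) := by
    intro t (ht : 0 < t)
    have hlog : log (t / (2 * a)) ≤ t / (2 * a) - 1 := log_le_sub_one_of_pos (by positivity)
    rw [log_div ht.ne' (by positivity)] at hlog
    have hlog' : a * log t - a * log (2 * a) ≤ t / 2 - a := by
      have e : a * (t / (2 * a)) = t / 2 := by field_simp
      linarith [mul_le_mul_of_nonneg_left hlog ha.le]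
    rw [rpow_def_of_pos ht, rpow_def_of_pos (by positivity), ← exp_add, ← exp_add, ← exp_add]
    exact exp_le_exp.2 (by linarith)
  rw [Gamma_eq_integral (by linarith), add_sub_cancel_right]
  calc ∫ t in Ioi 0, exp (-t) * t ^ a
      ≤ ∫ t in Ioi 0, (2 * a) ^ a * exp (-a) * exp (-(1 / 2) * t) :=
        setIntegral_mono_on hint ((integrableOn_exp_mul_Ioi (by norm_num) 0).const_mul _)
          measurableSet_Ioi hpt
    _ = 2 * (2 * a) ^ a * exp (-a) := by
        rw [integral_const_mul, integral_exp_mul_Ioi (by norm_num), mul_zero, exp_zero]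
        ring

lemma abs_log_Gamma_add_one_sub_mul_log_le (ha : 1 ≤ a) :
    |log (Gamma (a + 1)) - a * log a| ≤ a := by
  have ha0 : 0 < a := by linarith
  have hΓ : 0 < Gamma (a + 1) := Gamma_pos_of_pos (by linarith)
  have hlow := log_le_log (by positivity) (rpow_mul_exp_neg_le_Gamma_add_one ha0.le)
  have hupp := log_le_log hΓ (Gamma_add_one_le ha0)
  rw [log_mul (by positivity) (exp_pos _).ne', log_rpow ha0, log_exp] at hlow
  rw [log_mul (by positivity) (exp_pos _).ne', log_mul two_ne_zero (by positivity),
    log_rpow (by positivity), log_exp, log_mul two_ne_zero ha0.ne'] at hupp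
  have hlog2 : log 2 < 1 := by linarith [log_two_lt_d9]
  rw [abs_le]
  constructor <;> nlinarith

lemma isLittleO_self_mul_log_atTop : (fun a : ℝ => a) =o[atTop] fun a => a * log a := by
  simpa using (isBigO_refl (fun a : ℝ => a) atTop).mul_isLittleO
    (isLittleO_const_log_atTop (c := 1))

lemma isEquivalent_log_Gamma_add_one :
    (fun a => log (Gamma (a + 1))) ~[atTop] fun a => a * log a := by
  refine IsLittleO.isEquivalent
    (IsBigO.trans_isLittleO ?_ isLittleO_self_mul_log_atTop)
  refine IsBigO.of_bound 1 ?_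
  filter_upwards [eventually_ge_atTop 1] with a ha
  simpa [abs_of_pos (by linarith : (0 : ℝ) < a)] using abs_log_Gamma_add_one_sub_mul_log_le ha

end Gamma

section Log

lemma isLittleO_log_log_log_atTop : (fun y => log (log y)) =o[atTop] log :=
  isLittleO_log_id_atTop.comp_tendsto tendsto_log_atTop

lemma isEquivalent_log_mul_log : (fun a => log (a * log a)) ~[atTop] log := by
  refine (IsEquivalent.refl.add_isLittleO isLittleO_log_log_log_atTop).congr_left ?_
  filter_upwards [eventually_gt_atTop 1] with a ha
  rw [Pi.add_apply, log_mul (by linarith) (log_pos ha).ne']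

lemma isEquivalent_log_div_const {c : ℝ} (hc : 0 < c) : (fun y => log (y / c)) ~[atTop] log := by
  refine (IsEquivalent.refl.add_const_of_norm_tendsto_atTop (c := -log c)
    (tendsto_norm_atTop_atTop.comp tendsto_log_atTop)).congr_left ?_
  filter_upwards [eventually_gt_atTop 0] with y hy
  rw [log_div hy.ne' hc.ne', sub_eq_add_neg]

end Log

def IsLambertW (W : ℝ → ℝ) : Prop := ∀ y : ℝ, 0 ≤ y → 0 ≤ W y ∧ W y * exp (W y) = y

namespace IsLambertW

variable {W : ℝ → ℝ} {y : ℝ}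

lemma one_le (hW : IsLambertW W) (hy : exp 1 ≤ y) : 1 ≤ W y := by
  obtain ⟨h0, h1⟩ := hW y ((exp_pos 1).le.trans hy)
  by_contra! hlt
  have : W y * exp (W y) < 1 * exp 1 := mul_lt_mul'' hlt (exp_lt_exp.2 hlt) h0 (exp_pos _).le
  linarith

lemma add_log_eq_log (hW : IsLambertW W) (hy : exp 1 ≤ y) : W y + log (W y) = log y := by
  obtain ⟨_, h1⟩ := hW y ((exp_pos 1).le.trans hy)
  rw [← congrArg log h1, log_mul (by linarith [hW.one_le hy]) (exp_pos _).ne', log_exp, add_comm]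

lemma isEquivalent_log (hW : IsLambertW W) : W ~[atTop] log := by
  refine IsLittleO.isEquivalent (IsBigO.trans_isLittleO ?_ isLittleO_log_log_log_atTop)
  refine IsBigO.of_bound 1 ?_
  filter_upwards [eventually_ge_atTop (exp 1)] with y hy
  have hW1 := hW.one_le hy
  have hsub : W y - log y = -log (W y) := by linarith [hW.add_log_eq_log hy]
  have hle : log (W y) ≤ log (log y) :=
    log_le_log (by linarith) (by linarith [hW.add_log_eq_log hy, log_nonneg hW1])
  rw [one_mul, Pi.sub_apply, norm_eq_abs, norm_eq_abs, hsub, abs_neg, abs_of_nonneg (log_nonneg hW1)]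
  exact hle.trans (le_abs_self _)

lemma isEquivalent_log_of_isEquivalent_mul_log {α : Type*} {l : Filter α} (hW : IsLambertW W)
    {c : ℝ} (hc : 0 < c) {L a : α → ℝ} (hL : Tendsto L l atTop) (ha : Tendsto a l atTop)
    (hLa : L ~[l] fun i => a i * log (a i)) :
    (fun i => W (L i / c)) ~[l] fun i => log (a i) :=
  ((hW.isEquivalent_log.comp_tendsto (hL.atTop_div_const hc)).trans
    ((isEquivalent_log_div_const hc).comp_tendsto hL)).trans
    ((hLa.log (hLa.tendsto_atTop hL)).trans (isEquivalent_log_mul_log.comp_tendsto ha))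

end IsLambertW

section Root

variable {lam : ℝ}

lemma tendsto_atTop_of_tendsto_gFun {α : Type*} {l : Filter α} (hlam : 0 < lam) {x : α → ℝ}
    (hpos : ∀ᶠ i in l, 0 < x i) (hg : Tendsto (fun i => gFun lam (x i)) l (nhds 0)) :
    Tendsto x l atTop := by
  refine tendsto_atTop.2 fun M => ?_
  set M' := max M 0
  set B := (M' + 1) * |log lam| + lam + log (Gamma (M' + 2))
  have hbound : ∀ y, 0 < y → y ≤ M' → exp (-B) ≤ gFun lam y := by
    intro y hy hyM
    have hΓ : log (Gamma (y + 2)) ≤ log (Gamma (M' + 2)) :=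
      log_le_log (Gamma_pos_of_pos (by linarith)) <| Gamma_strictMonoOn_Ici.monotoneOn
        (by rw [mem_Ici]; linarith) (by simp [M']) (by linarith)
    have habs := neg_abs_le (log (gFun lam y) + log (Gamma (y + 2)))
    have hlamM := mul_le_mul_of_nonneg_right (by linarith : y + 1 ≤ M' + 1) (abs_nonneg (log lam))
    rw [← exp_log (gFun_pos hlam (by linarith))]
    exact exp_le_exp.2 (by linarith [abs_log_gFun_add_log_Gamma_le hlam (by linarith : -1 < y)])
  filter_upwards [hpos, hg.eventually (gt_mem_nhds (exp_pos (-B)))] with i hi hgi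
  by_contra! hiM
  exact (hbound _ hi (hiM.le.trans (le_max_left _ _))).not_gt hgi

lemma isEquivalent_log_one_div_gFun (hlam : 0 < lam) :
    (fun x => log (1 / gFun lam x)) ~[atTop] fun x => (x + 1) * log (x + 1) := by
  have hshift : Tendsto (fun x : ℝ => x + 1) atTop atTop :=
    tendsto_atTop_add_const_right _ 1 tendsto_id
  have hΓ : (fun x => log (Gamma (x + 2))) ~[atTop] fun x => (x + 1) * log (x + 1) := by
    simpa only [Function.comp_def, add_assoc, one_add_one_eq_two]
      using isEquivalent_log_Gamma_add_one.comp_tendsto hshift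
  have herr : (fun x => log (1 / gFun lam x) - log (Gamma (x + 2))) =O[atTop] fun x => x + 1 := by
    refine IsBigO.of_bound (|log lam| + lam) ?_
    filter_upwards [eventually_ge_atTop 0] with x hx
    have hsum : log (1 / gFun lam x) - log (Gamma (x + 2))
        = -(log (gFun lam x) + log (Gamma (x + 2))) := by
      rw [one_div, log_inv]; ring
    rw [norm_eq_abs, norm_eq_abs, abs_of_pos (by linarith : 0 < x + 1), hsum, abs_neg]
    nlinarith [abs_log_gFun_add_log_Gamma_le hlam (by linarith : -1 < x), abs_nonneg (log lam)]
  exact ((herr.trans_isLittleO (isLittleO_self_mul_log_atTop.comp_tendsto hshift)).add_isEquivalent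
    hΓ).congr_left (Eventually.of_forall fun x => sub_add_cancel _ _)

end Root

/-- If `x(ε)` solves `g_λ(x(ε)) = ε` on `(0, ∞)` for all small `ε > 0`, then as `ε → 0⁺`,
`x(ε) ∼ L / W(L/(eλ))` where `L = log(1/ε)` and `W` is the principal Lambert W function. -/
theorem root_asymptotic (lam : ℝ) (hlam : 0 < lam)
    (W : ℝ → ℝ) (hW : ∀ y : ℝ, 0 ≤ y → 0 ≤ W y ∧ W y * Real.exp (W y) = y)
    (xe : ℝ → ℝ)
    (hxe : ∀ᶠ ε in nhdsWithin 0 (Set.Ioi 0), 0 < xe ε ∧ gFun lam (xe ε) = ε) :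
    Tendsto
      (fun ε : ℝ =>
        xe ε / (Real.log (1 / ε) / W (Real.log (1 / ε) / (Real.exp 1 * lam))))
      (nhdsWithin 0 (Set.Ioi 0)) (nhds 1) := by
  have hL : Tendsto (fun ε : ℝ => log (1 / ε)) (nhdsWithin 0 (Ioi 0)) atTop := by
    simpa only [one_div, Function.comp_def] using tendsto_log_atTop.comp tendsto_inv_nhdsGT_zero
  have hx : Tendsto xe (nhdsWithin 0 (Ioi 0)) atTop :=
    tendsto_atTop_of_tendsto_gFun hlam (hxe.mono fun _ h => h.1)
      ((tendsto_nhdsWithin_of_tendsto_nhds tendsto_id).congr' (hxe.mono fun _ h => h.2.symm))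
  have ha : Tendsto (fun ε => xe ε + 1) (nhdsWithin 0 (Ioi 0)) atTop :=
    tendsto_atTop_add_const_right _ 1 hx
  have hLa : (fun ε => log (1 / ε)) ~[nhdsWithin 0 (Ioi 0)]
      fun ε => (xe ε + 1) * log (xe ε + 1) :=
    ((isEquivalent_log_one_div_gFun hlam).comp_tendsto hx).congr_left
      (hxe.mono fun _ h => by rw [Function.comp_apply, h.2])
  have hWa : (fun ε => W (log (1 / ε) / (exp 1 * lam))) ~[nhdsWithin 0 (Ioi 0)]
      fun ε => log (xe ε + 1) :=
    IsLambertW.isEquivalent_log_of_isEquivalent_mul_log hW (by positivity) hL ha hLa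
  have hxa : xe ~[nhdsWithin 0 (Ioi 0)] fun ε => xe ε + 1 :=
    (IsEquivalent.refl.add_const_of_norm_tendsto_atTop (tendsto_norm_atTop_atTop.comp hx)).symm
  refine IsEquivalent.tendsto_const ((((hxa.mul hWa).div hLa).congr_left
    (Eventually.of_forall fun ε => ?_)).trans_eventuallyEq ?_)
  · simp only [Pi.div_apply, Pi.mul_apply, div_div_eq_mul_div]
  · filter_upwards [ha.eventually (eventually_gt_atTop 1)] with ε hε
    simp only [Pi.div_apply, Pi.mul_apply]
    exact div_self (mul_pos (by linarith) (log_pos hε)).ne'
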